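/- For a toric monoid P with associated dual cone σ_P = Hom(P, ℝ_{≥0}), the assignment sending a face τ of σ_P to 𝔭_τ := P − (τ^⊥ ∩ P) is a bijection between the faces of σ_P and the prime ideals of P. -/

import Mathlib

/-!
If `P` is generated by a finite set `S` and `I` is a prime ideal, the complement of `I` is
generated by `S \ I`, so a nonnegative `v` vanishes on it exactly when it vanishes on
`u = ∑ (S \ I)`; hence `𝔭_{u^⊥} ⊆ I`. For the reverse inclusion, given `p ∈ I` we need `v ≥ 0`
with `v u = 0 < v p`. No `n • p + x` with `n > 0` is a multiple of `u` (the former lies in `I`,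
the latter does not), so after clearing denominators `-p` is not in the rational cone spanned by
`P` and `-u` inside `ℚ ⊗ P^gp`, and Farkas' lemma separates them. Injectivity is formal:
`u ∉ 𝔭_{u^⊥}`, and `u' ∉ 𝔭_τ` forces `τ ⊆ u'^⊥`.
-/

/-- A toric monoid: finitely generated, integral (cancellative), saturated and
torsion-free commutative monoid. -/
def IsToric (P : Type*) [AddCommMonoid P] : Prop :=
  AddMonoid.FG P ∧
  (∀ a b c : P, a + b = a + c → b = c) ∧
  (∀ (n : ℕ) (p q : P), 0 < n → n • p = n • q → p = q) ∧
  (∀ (n : ℕ) (p q r : P), 0 < n → n • p = n • q + r → ∃ s : P, p = q + s)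

namespace PointedCone

variable {𝕜 V : Type*} [Field 𝕜] [LinearOrder 𝕜] [IsStrictOrderedRing 𝕜]
  [AddCommGroup V] [Module 𝕜 V]

theorem apply_nonneg_of_mem_hull {s : Set V} {f : Module.Dual 𝕜 V} (hf : ∀ x ∈ s, 0 ≤ f x) {z : V}
    (hz : z ∈ hull 𝕜 s) : 0 ≤ f z :=
  (Submodule.span_le (p := (positive 𝕜 𝕜).comap f)).mpr hf hz

theorem hull_image_eq_map (π : V →ₗ[𝕜] V) (s : Set V) : hull 𝕜 (π '' s) = (hull 𝕜 s).map π :=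
  (Submodule.map_span (π : V →ₗ[{c : 𝕜 // 0 ≤ c}] V) s).symm

/-- Farkas' lemma over an ordered field. -/
theorem exists_dual_nonneg_of_notMem_hull {ι : Type*} [Finite ι] (t : ι → V) {y : V}
    (hy : y ∉ hull 𝕜 (Set.range t)) :
    ∃ f : Module.Dual 𝕜 V, (∀ i, 0 ≤ f (t i)) ∧ f y < 0 := by
  revert t y
  refine Finite.induction_empty_option (P := fun ι => ∀ (t : ι → V) {y : V},
    y ∉ hull 𝕜 (Set.range t) → ∃ f : Module.Dual 𝕜 V, (∀ i, 0 ≤ f (t i)) ∧ f y < 0)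
    ?_ ?_ ?_ ι
  · intro α β e h t y hy
    obtain ⟨f, hf, hfy⟩ := h (t ∘ e) (by rwa [e.surjective.range_comp])
    exact ⟨f, e.surjective.forall.mpr hf, hfy⟩
  · intro t y hy
    have hy0 : y ≠ 0 := by rintro rfl; exact hy (zero_mem _)
    obtain ⟨f, hf⟩ := Module.Projective.exists_dual_eq_one 𝕜 hy0
    exact ⟨-f, PEmpty.rec, by simp [hf]⟩
  · intro α _ ih t y hy
    rw [Option.range_eq] at hy
    set x := t none
    obtain ⟨f, hf, hfy⟩ :=
      ih (t ∘ some) fun h => hy (Submodule.span_mono (Set.subset_insert _ _) h)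
    by_cases hfx : 0 ≤ f x
    · exact ⟨f, Option.rec hfx hf, hfy⟩
    push Not at hfx
    -- Fourier–Motzkin step: project along `x` onto `ker f`.
    let π : V →ₗ[𝕜] V := LinearMap.id - (f x)⁻¹ • f.smulRight x
    have hπ : ∀ z, π z = z - ((f x)⁻¹ * f z) • x := fun z => by simp [π, mul_smul]
    have hπx : π x = 0 := by rw [hπ, inv_mul_cancel₀ hfx.ne, one_smul, sub_self]
    have hπy : π y ∉ hull 𝕜 (Set.range (π ∘ t ∘ some)) := by
      rw [Set.range_comp, hull_image_eq_map]
      rintro ⟨z, hz, hzy⟩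
      have hfz : 0 ≤ f z := apply_nonneg_of_mem_hull (by simpa using hf) hz
      have hc : 0 < (f x)⁻¹ * (f y - f z) :=
        mul_pos_of_neg_of_neg (inv_lt_zero.mpr hfx) (by linarith)
      have hyz : y = z + ((f x)⁻¹ * (f y - f z)) • x := by
        have : π z = π y := hzy
        rw [hπ, hπ] at this
        rw [mul_sub, sub_smul]
        linear_combination (norm := module) -this
      refine hy ?_
      rw [hyz]
      exact add_mem (Submodule.span_mono (Set.subset_insert _ _) hz)
        (smul_mem _ hc.le (subset_hull (Set.mem_insert _ _)))
    obtain ⟨g, hg, hgy⟩ := ih (π ∘ t ∘ some) hπy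
    exact ⟨g ∘ₗ π, Option.rec (by simp [x, hπx]) hg, hgy⟩

end PointedCone

theorem PointedCone.exists_nsmul_mem_closure_of_mem_hull {V : Type*} [AddCommGroup V] [Module ℚ V]
    {s : Set V} {x : V} (hx : x ∈ PointedCone.hull ℚ s) :
    ∃ n : ℕ, 0 < n ∧ n • x ∈ AddSubmonoid.closure s := by
  induction hx using Submodule.span_induction with
  | mem x hx => exact ⟨1, one_pos, by simpa using AddSubmonoid.subset_closure hx⟩
  | zero => exact ⟨1, one_pos, by simp⟩
  | add x y _ _ hx hy =>
    obtain ⟨m, hm, hmx⟩ := hx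
    obtain ⟨n, hn, hny⟩ := hy
    refine ⟨m * n, Nat.mul_pos hm hn, ?_⟩
    rw [smul_add, mul_nsmul, mul_comm m n, mul_nsmul]
    exact add_mem (AddSubmonoid.nsmul_mem _ hmx n) (AddSubmonoid.nsmul_mem _ hny m)
  | smul c x _ hx =>
    obtain ⟨n, hn, hnx⟩ := hx
    let q : ℚ≥0 := c
    refine ⟨q.den * n, Nat.mul_pos q.den_pos hn, ?_⟩
    have : (q.den * n) • (c • x) = q.num • (n • x) := by
      have hq : (q.den : ℚ) * c = q.num := by
        have h := congrArg ((↑) : ℚ≥0 → ℚ) (NNRat.den_mul_eq_num q)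
        rwa [NNRat.cast_mul, NNRat.cast_natCast, NNRat.cast_natCast] at h
      simp only [← Nonneg.coe_smul, ← Nat.cast_smul_eq_nsmul ℚ, smul_smul, Nat.cast_mul, ← hq]
      ring_nf
    rw [this]
    exact AddSubmonoid.nsmul_mem _ hnx _

open scoped TensorProduct

namespace Algebra.GrothendieckAddGroup

variable {P : Type*} [AddCommMonoid P]

noncomputable def toRat : P →+ ℚ ⊗[ℤ] GrothendieckAddGroup P :=
  (TensorProduct.mk ℤ ℚ (GrothendieckAddGroup P) 1).toAddMonoidHom.comp of

theorem exists_nsmul_eq_of_toRat_eq [IsCancelAdd P] {a b : P} (h : toRat a = toRat b) :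
    ∃ n : ℕ, 0 < n ∧ n • a = n • b := by
  have h' : TensorProduct.mk ℤ ℚ (GrothendieckAddGroup P) 1 (of a) =
      TensorProduct.mk ℤ ℚ (GrothendieckAddGroup P) 1 (of b) := h
  obtain ⟨⟨c, hc⟩, hcab⟩ := (IsLocalizedModule.eq_iff_exists (nonZeroDivisors ℤ) _).mp h'
  have hc0 : c ≠ 0 := nonZeroDivisors.ne_zero hc
  simp only [Submonoid.smul_def] at hcab
  obtain ⟨n, rfl | rfl⟩ := Int.eq_nat_or_neg c
  all_goals simp only [neg_zsmul, neg_inj, natCast_zsmul] at hcab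
  all_goals exact ⟨n, by omega, of_injective (by simpa only [map_nsmul] using hcab)⟩

end Algebra.GrothendieckAddGroup

open Algebra.GrothendieckAddGroup in
theorem exists_nonneg_addMonoidHom_of_forall_nsmul_add_ne {P : Type*} [AddCommMonoid P]
    [IsCancelAdd P] (hP : AddMonoid.FG P) {u p : P}
    (h : ∀ (n k : ℕ) (x : P), 0 < n → n • p + x ≠ k • u) :
    ∃ v : P →+ ℝ, (∀ x, 0 ≤ v x) ∧ v u = 0 ∧ 0 < v p := by
  obtain ⟨S, hS⟩ := hP.fg_top
  let t : Option S → ℚ ⊗[ℤ] Algebra.GrothendieckAddGroup P :=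
    fun o => o.elim (-toRat u) (toRat ·.1)
  have hclosure : ∀ z ∈ AddSubmonoid.closure (Set.range t), ∃ (k : ℕ) (x : P),
      z = toRat x + k • (-toRat u) := by
    intro z hz
    induction hz using AddSubmonoid.closure_induction with
    | mem z hz =>
      obtain ⟨_ | s, rfl⟩ := hz
      · exact ⟨1, 0, by simp [t]⟩
      · exact ⟨0, s, by simp [t]⟩
    | zero => exact ⟨0, 0, by simp⟩
    | add z w _ _ hz hw =>
      obtain ⟨k, x, rfl⟩ := hz
      obtain ⟨l, y, rfl⟩ := hw
      exact ⟨k + l, x + y, by rw [map_add, add_nsmul]; abel⟩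
  have hp : -toRat p ∉ PointedCone.hull ℚ (Set.range t) := by
    -- `P → ℚ ⊗ P^gp` has torsion kernel, so a rational relation descends to `n • p + x = k • u`
    intro hmem
    obtain ⟨n, hn, hnp⟩ := PointedCone.exists_nsmul_mem_closure_of_mem_hull hmem
    obtain ⟨k, x, hkx⟩ := hclosure _ hnp
    have : toRat (n • p + x) = toRat (k • u) := by
      rw [map_add, map_nsmul, map_nsmul]
      rw [smul_neg, smul_neg] at hkx
      linear_combination (norm := abel) -hkx
    obtain ⟨m, hm, hmkx⟩ := exists_nsmul_eq_of_toRat_eq this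
    refine h (m * n) (m * k) (m • x) (Nat.mul_pos hm hn) ?_
    rw [mul_nsmul', mul_nsmul', ← smul_add, hmkx]
  obtain ⟨f, hf, hfp⟩ := PointedCone.exists_dual_nonneg_of_notMem_hull t hp
  have hf_nonneg : ∀ x, 0 ≤ f (toRat x) := by
    intro x
    have hle : AddSubmonoid.closure (S : Set P) ≤
        (AddSubmonoid.nonneg ℚ).comap (f.toAddMonoidHom.comp toRat) :=
      AddSubmonoid.closure_le.mpr fun s hs => hf (some ⟨s, hs⟩)
    exact hle (hS ▸ AddSubmonoid.mem_top x)
  have hfu : f (toRat u) = 0 :=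
    le_antisymm (by simpa [t] using hf none) (hf_nonneg u)
  refine ⟨(Rat.castHom ℝ).toAddMonoidHom.comp (f.toAddMonoidHom.comp toRat), fun x => ?_, ?_, ?_⟩
  · simpa using hf_nonneg x
  · simpa using hfu
  · simpa using hfp

section PrimeIdeals

variable {P : Type*} [AddCommMonoid P]

structure IsPrimeAddIdeal (I : Set P) : Prop where
  add_mem : ∀ p x : P, x ∈ I → p + x ∈ I
  ne_univ : I ≠ Set.univ
  mem_or_mem : ∀ p q : P, p + q ∈ I → p ∈ I ∨ q ∈ I

theorem isPrimeAddIdeal_iff {I : Set P} : IsPrimeAddIdeal I ↔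
    (∀ p x : P, x ∈ I → p + x ∈ I) ∧ I ≠ Set.univ ∧ ∀ p q : P, p + q ∈ I → p ∈ I ∨ q ∈ I :=
  ⟨fun ⟨h₁, h₂, h₃⟩ => ⟨h₁, h₂, h₃⟩, fun ⟨h₁, h₂, h₃⟩ => ⟨h₁, h₂, h₃⟩⟩

namespace IsPrimeAddIdeal

variable {I : Set P} (hI : IsPrimeAddIdeal I)
include hI

theorem zero_notMem : (0 : P) ∉ I := fun h0 =>
  hI.ne_univ (Set.eq_univ_of_forall fun p => by simpa using hI.add_mem p 0 h0)

def primeCompl : AddSubmonoid P where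
  carrier := Iᶜ
  add_mem' hp hq hpq := (hI.mem_or_mem _ _ hpq).elim hp hq
  zero_mem' := hI.zero_notMem

theorem mem_closure_of_notMem {S : Set P} (hS : AddSubmonoid.closure S = ⊤) {p : P}
    (hp : p ∉ I) : p ∈ AddSubmonoid.closure {s ∈ S | s ∉ I} := by
  have hpS : p ∈ AddSubmonoid.closure S := hS ▸ AddSubmonoid.mem_top p
  induction hpS using AddSubmonoid.closure_induction with
  | mem s hs => exact AddSubmonoid.subset_closure ⟨hs, hp⟩
  | zero => exact zero_mem _
  | add x y _ _ hx hy =>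
    have hxy : x ∉ I ∧ y ∉ I := ⟨fun h => hp (add_comm y x ▸ hI.add_mem y x h),
      fun h => hp (hI.add_mem x y h)⟩
    exact AddSubmonoid.add_mem _ (hx hxy.1) (hy hxy.2)

end IsPrimeAddIdeal

abbrev DualCone (P : Type*) [AddCommMonoid P] := {v : P →+ ℝ // ∀ p : P, 0 ≤ v p}

namespace DualCone

def face (u : P) : Set (DualCone P) := {v | v.1 u = 0}

/-- The ideal `𝔭_τ = P − τ^⊥` of a set `τ ⊆ σ_P = DualCone P`. -/
def complPerp (F : Set (DualCone P)) : Set P := {p | ∃ v ∈ F, v.1 p ≠ 0}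

theorem isPrimeAddIdeal_complPerp (F : Set (DualCone P)) : IsPrimeAddIdeal (complPerp F) where
  add_mem p x := by
    rintro ⟨v, hv, hvx⟩
    refine ⟨v, hv, ?_⟩
    rw [map_add]
    exact (add_pos_of_nonneg_of_pos (v.2 p) ((v.2 x).lt_of_ne' hvx)).ne'
  ne_univ h := by
    obtain ⟨v, -, hv0⟩ := h.symm ▸ Set.mem_univ (0 : P)
    exact hv0 (map_zero v.1)
  mem_or_mem p q := by
    rintro ⟨v, hv, hpq⟩
    by_cases hp : v.1 p = 0
    · exact .inr ⟨v, hv, by simpa [hp] using hpq⟩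
    · exact .inl ⟨v, hv, hp⟩

theorem notMem_complPerp_face_self (u : P) : u ∉ complPerp (face u) :=
  fun ⟨_, hv, hvu⟩ => hvu hv

theorem face_subset_face_of_notMem_complPerp {u u' : P} (h : u' ∉ complPerp (face u)) :
    face u ⊆ face u' :=
  fun v hv => by_contra fun hvu' => h ⟨v, hv, hvu'⟩

theorem eq_zero_of_mem_closure (v : DualCone P) {T : Finset P} (hv : v.1 (∑ t ∈ T, t) = 0)
    {x : P} (hx : x ∈ AddSubmonoid.closure (T : Set P)) : v.1 x = 0 := by
  rw [map_sum, Finset.sum_eq_zero_iff_of_nonneg fun t _ => v.2 t] at hv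
  exact (AddSubmonoid.closure_le (S := AddMonoidHom.mker v.1)).mpr hv hx

theorem exists_complPerp_face_eq [IsCancelAdd P] (hP : AddMonoid.FG P) {I : Set P}
    (hI : IsPrimeAddIdeal I) : ∃ u, complPerp (face u) = I := by
  classical
  obtain ⟨S, hS⟩ := hP.fg_top
  let T := S.filter (· ∉ I)
  have hT : AddSubmonoid.closure (T : Set P) ≤ hI.primeCompl :=
    AddSubmonoid.closure_le.mpr fun t ht => (Finset.mem_filter.mp ht).2
  refine ⟨∑ t ∈ T, t, Set.ext fun p => ⟨?_, fun hp => ?_⟩⟩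
  · rintro ⟨v, hv, hvp⟩
    by_contra hp
    refine hvp (eq_zero_of_mem_closure v hv ?_)
    simpa [T] using hI.mem_closure_of_notMem hS hp
  · have hu : ∑ t ∈ T, t ∈ hI.primeCompl := hT (AddSubmonoid.sum_mem _ fun t ht =>
      AddSubmonoid.subset_closure ht)
    obtain ⟨v, hv, hvu, hvp⟩ := exists_nonneg_addMonoidHom_of_forall_nsmul_add_ne hP
      (u := ∑ t ∈ T, t) (p := p) fun n k x hn hnpx => by
        obtain ⟨m, rfl⟩ := Nat.exists_eq_add_of_lt hn
        refine AddSubmonoid.nsmul_mem _ hu k (hnpx ▸ ?_)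
        rw [add_comm, succ_nsmul]
        exact hI.add_mem _ _ (hI.add_mem _ _ hp)
    exact ⟨⟨v, hv⟩, hvu, hvp.ne'⟩

theorem bijOn_complPerp_face [IsCancelAdd P] (hP : AddMonoid.FG P) :
    Set.BijOn complPerp {F | ∃ u : P, F = face u} {I : Set P | IsPrimeAddIdeal I} := by
  refine ⟨fun F _ => isPrimeAddIdeal_complPerp F, ?_, fun I hI => ?_⟩
  · rintro _ ⟨u, rfl⟩ _ ⟨u', rfl⟩ h
    exact (face_subset_face_of_notMem_complPerp (h ▸ notMem_complPerp_face_self u')).antisymm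
      (face_subset_face_of_notMem_complPerp (h ▸ notMem_complPerp_face_self u))
  · obtain ⟨u, hu⟩ := exists_complPerp_face_eq hP hI
    exact ⟨face u, ⟨u, rfl⟩, hu⟩

end DualCone

end PrimeIdeals

/-- For a toric monoid `P` with dual cone `σ_P = Hom(P, ℝ≥0)` (modelled as the
set of additive homomorphisms `P →+ ℝ` with nonnegative values), the assignment
sending a face `τ` of `σ_P` (the intersection of `σ_P` with a supporting
hyperplane `u^⊥`, `u ∈ P`) to the prime ideal
`𝔭_τ = P − (τ^⊥ ∩ P) = {p | ∃ v ∈ τ, v p ≠ 0}` is a bijection between the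
faces of `σ_P` and the prime ideals of `P`. -/
theorem face_prime_ideal_bijection {P : Type*} [AddCommMonoid P] (hP : IsToric P) :
    Set.BijOn
      (fun F : Set {v : P →+ ℝ // ∀ p : P, 0 ≤ v p} => {p : P | ∃ v ∈ F, v.1 p ≠ 0})
      {F : Set {v : P →+ ℝ // ∀ p : P, 0 ≤ v p} | ∃ u : P, F = {v | v.1 u = 0}}
      {I : Set P | (∀ p x : P, x ∈ I → p + x ∈ I) ∧ I ≠ Set.univ ∧
        ∀ p q : P, p + q ∈ I → p ∈ I ∨ q ∈ I} := by
  obtain ⟨hFG, hcancel, -, -⟩ := hP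
  have : IsLeftCancelAdd P := ⟨hcancel⟩
  have : IsCancelAdd P := AddCommMagma.IsLeftCancelAdd.toIsCancelAdd P
  have key := DualCone.bijOn_complPerp_face hFG
  simp only [isPrimeAddIdeal_iff] at key
  exact key
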